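/- Let V₁, V₂, V₃ be closed subspaces of a Hilbert space with ε_{ij} = cos ∠(V_i, V_j) (Friedrichs angles) satisfying ε₁₂ < 1. Then cos² ∠(V₁ + V₂, V₃) ≤ (ε₁₃² + ε₂₃² + 2 ε₁₂ ε₂₃ ε₁₃)/(1 − ε₁₂²), provided V₁ + V₂ is closed (which holds when ∠(V₁,V₂) > 0). -/

import Mathlib

open scoped RealInnerProductSpace

/-- The cosine of the Friedrichs angle between two subspaces. -/
noncomputable def friedrichsCos {H : Type*} [NormedAddCommGroup H] [InnerProductSpace ℝ H]
    (V₁ V₂ : Submodule ℝ H) : ℝ :=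
  sSup {r : ℝ | ∃ v₁ v₂ : H, v₁ ∈ V₁ ∧ v₂ ∈ V₂ ∧ ‖v₁‖ = 1 ∧ ‖v₂‖ = 1 ∧
    v₁ ∈ (V₁ ⊓ V₂)ᗮ ∧ v₂ ∈ (V₁ ⊓ V₂)ᗮ ∧ r = |⟪v₁, v₂⟫|}

/-!
Write a unit vector `u ∈ V₁ + V₂` as `u₁ + u₂` with `u₁ ∈ V₁` and `u₂ ∈ V₂ ⊖ (V₁ ∩ V₂)`, and let
`v ∈ V₃` be a unit vector orthogonal to `(V₁ + V₂) ∩ V₃`. With `a = ‖u₁‖`, `b = ‖u₂‖`, the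
Friedrichs angles give `|⟪u, v⟫| ≤ ε₁₃ a + ε₂₃ b` and `1 = ‖u‖² ≥ a² + b² - 2 ε₁₂ a b`. Maximising
the linear form `ε₁₃ a + ε₂₃ b` over this ellipse (Cauchy–Schwarz for the quadratic form
`a² + b² - 2 ε₁₂ a b`) gives the bound.
-/

namespace Submodule

variable {H : Type*} [NormedAddCommGroup H] [InnerProductSpace ℝ H] {A B : Submodule ℝ H}

theorem friedrichsCos_nonneg (A B : Submodule ℝ H) : 0 ≤ friedrichsCos A B :=
  Real.sSup_nonneg (by rintro r ⟨v₁, v₂, -, -, -, -, -, -, rfl⟩; exact abs_nonneg _)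

theorem abs_inner_le_friedrichsCos {u v : H} (hu : u ∈ A) (hv : v ∈ B) (hnu : ‖u‖ = 1)
    (hnv : ‖v‖ = 1) (hu' : u ∈ (A ⊓ B)ᗮ) (hv' : v ∈ (A ⊓ B)ᗮ) :
    |⟪u, v⟫| ≤ friedrichsCos A B :=
  le_csSup ⟨1, by
      rintro _ ⟨u, v, -, -, hu, hv, -, -, rfl⟩
      simpa [hu, hv] using abs_real_inner_le_norm u v⟩
    ⟨u, v, hu, hv, hnu, hnv, hu', hv', rfl⟩

theorem friedrichsCos_le {c : ℝ} (hc : 0 ≤ c)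
    (h : ∀ u ∈ A, ∀ v ∈ B, ‖u‖ = 1 → ‖v‖ = 1 → u ∈ (A ⊓ B)ᗮ → v ∈ (A ⊓ B)ᗮ → |⟪u, v⟫| ≤ c) :
    friedrichsCos A B ≤ c :=
  Real.sSup_le (fun _ ⟨u, v, hu, hv, hnu, hnv, hu', hv', hr⟩ => hr ▸ h u hu v hv hnu hnv hu' hv') hc

theorem friedrichsCos_sq_le {c : ℝ} (hc : 0 ≤ c)
    (h : ∀ u ∈ A, ∀ v ∈ B, ‖u‖ = 1 → ‖v‖ = 1 → u ∈ (A ⊓ B)ᗮ → v ∈ (A ⊓ B)ᗮ → |⟪u, v⟫| ^ 2 ≤ c) :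
    friedrichsCos A B ^ 2 ≤ c := by
  have hle : friedrichsCos A B ≤ √c :=
    friedrichsCos_le (Real.sqrt_nonneg c) fun u hu v hv hnu hnv hu' hv' =>
      (Real.le_sqrt (abs_nonneg _) hc).2 (h u hu v hv hnu hnv hu' hv')
  calc friedrichsCos A B ^ 2 ≤ √c ^ 2 := by gcongr; exact friedrichsCos_nonneg A B
    _ = c := Real.sq_sqrt hc

theorem friedrichsCos_le_one (A B : Submodule ℝ H) : friedrichsCos A B ≤ 1 :=
  friedrichsCos_le zero_le_one fun u _ v _ hnu hnv _ _ => by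
    simpa [hnu, hnv] using abs_real_inner_le_norm u v

theorem abs_inner_le_friedrichsCos_mul {x y : H} (hx : x ∈ A) (hy : y ∈ B)
    (hx' : x ∈ (A ⊓ B)ᗮ) (hy' : y ∈ (A ⊓ B)ᗮ) :
    |⟪x, y⟫| ≤ friedrichsCos A B * (‖x‖ * ‖y‖) := by
  rcases eq_or_ne x 0 with rfl | hx0
  · simp
  rcases eq_or_ne y 0 with rfl | hy0
  · simp
  have hunit := abs_inner_le_friedrichsCos (A.smul_mem ‖x‖⁻¹ hx) (B.smul_mem ‖y‖⁻¹ hy)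
    (norm_smul_inv_norm hx0) (norm_smul_inv_norm hy0) (smul_mem _ _ hx') (smul_mem _ _ hy')
  have hscale : |⟪‖x‖⁻¹ • x, ‖y‖⁻¹ • y⟫| = |⟪x, y⟫| / (‖x‖ * ‖y‖) := by
    rw [real_inner_smul_left, real_inner_smul_right, abs_mul, abs_mul, abs_inv, abs_inv,
      abs_norm, abs_norm, div_eq_mul_inv, mul_inv]
    ring
  rwa [hscale, div_le_iff₀ (by positivity)] at hunit

/-- Projecting `x` onto `(A ⊓ B)ᗮ` keeps it in the closed subspace `A`, does not increase its
norm and does not change `⟪x, y⟫`. -/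
theorem abs_inner_le_friedrichsCos_mul_of_isClosed [CompleteSpace H] (hA : IsClosed (A : Set H))
    {x y : H} (hx : x ∈ A) (hy : y ∈ B) (hy' : y ∈ (A ⊓ B)ᗮ) :
    |⟪x, y⟫| ≤ friedrichsCos A B * (‖x‖ * ‖y‖) := by
  set K := (A ⊓ B).topologicalClosure
  have hKA : K ≤ A := topologicalClosure_minimal _ inf_le_left hA
  have hyK : y ∈ Kᗮ := by rwa [orthogonal_closure]
  have hx'A : Kᗮ.starProjection x ∈ A := by
    rw [starProjection_orthogonal_val]
    exact A.sub_mem hx (hKA (K.starProjection_apply_mem x))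
  have hx'orth : Kᗮ.starProjection x ∈ (A ⊓ B)ᗮ := by
    rw [← orthogonal_closure]
    exact Kᗮ.starProjection_apply_mem x
  have hinner : ⟪x, y⟫ = ⟪Kᗮ.starProjection x, y⟫ := by
    rw [inner_starProjection_left_eq_right, starProjection_eq_self_iff.2 hyK]
  calc |⟪x, y⟫| = |⟪Kᗮ.starProjection x, y⟫| := by rw [hinner]
    _ ≤ friedrichsCos A B * (‖Kᗮ.starProjection x‖ * ‖y‖) :=
      abs_inner_le_friedrichsCos_mul hx'A hy hx'orth hy'
    _ ≤ friedrichsCos A B * (‖x‖ * ‖y‖) := by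
      gcongr
      exacts [friedrichsCos_nonneg A B, norm_starProjection_apply_le _ x]

theorem exists_add_eq_of_mem_sup_of_mem_orthogonal_inf [CompleteSpace H]
    (hA : IsClosed (A : Set H)) (hB : IsClosed (B : Set H)) {u : H} (hu : u ∈ A ⊔ B) :
    ∃ u₁ ∈ A, ∃ u₂ ∈ B, u₂ ∈ (A ⊓ B)ᗮ ∧ u₁ + u₂ = u := by
  obtain ⟨x, hx, y, hy, rfl⟩ := mem_sup.1 hu
  have : CompleteSpace (A ⊓ B : Submodule ℝ H) := (hA.inter hB).completeSpace_coe
  have hp := mem_inf.1 ((A ⊓ B).starProjection_apply_mem y)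
  exact ⟨x + (A ⊓ B).starProjection y, A.add_mem hx hp.1, y - (A ⊓ B).starProjection y,
    B.sub_mem hy hp.2, sub_starProjection_mem_orthogonal y, by abel⟩

end Submodule

/-- Cauchy–Schwarz for the quadratic form `a² + b² - 2εab`, whose dual form has Gram determinant
`1 - ε²`; the difference of the two sides is `((β + εα) a - (α + εβ) b)²`. -/
theorem add_mul_sq_mul_one_sub_sq_le (α β ε a b : ℝ) :
    (α * a + β * b) ^ 2 * (1 - ε ^ 2) ≤
      (α ^ 2 + β ^ 2 + 2 * ε * β * α) * (a ^ 2 + b ^ 2 - 2 * ε * (a * b)) := by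
  nlinarith [sq_nonneg ((β + ε * α) * a - (α + ε * β) * b)]

open Submodule in
theorem sq_abs_inner_mul_le_of_mem_sup {H : Type*} [NormedAddCommGroup H] [InnerProductSpace ℝ H]
    [CompleteSpace H] {V₁ V₂ V₃ : Submodule ℝ H} (hV₁ : IsClosed (V₁ : Set H))
    (hV₂ : IsClosed (V₂ : Set H)) {u v : H} (hu : u ∈ V₁ ⊔ V₂) (hv : v ∈ V₃) (hnu : ‖u‖ = 1)
    (hnv : ‖v‖ = 1) (hv' : v ∈ ((V₁ ⊔ V₂) ⊓ V₃)ᗮ) :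
    |⟪u, v⟫| ^ 2 * (1 - friedrichsCos V₁ V₂ ^ 2) ≤
      friedrichsCos V₁ V₃ ^ 2 + friedrichsCos V₂ V₃ ^ 2 +
        2 * friedrichsCos V₁ V₂ * friedrichsCos V₂ V₃ * friedrichsCos V₁ V₃ := by
  obtain ⟨u₁, hu₁, u₂, hu₂, hu₂', rfl⟩ :=
    exists_add_eq_of_mem_sup_of_mem_orthogonal_inf hV₁ hV₂ hu
  set ε := friedrichsCos V₁ V₂
  set ε₁₃ := friedrichsCos V₁ V₃
  set ε₂₃ := friedrichsCos V₂ V₃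
  have h₁₃ : |⟪u₁, v⟫| ≤ ε₁₃ * ‖u₁‖ := by
    simpa [hnv] using abs_inner_le_friedrichsCos_mul_of_isClosed hV₁ hu₁ hv
      (orthogonal_le (inf_le_inf_right V₃ le_sup_left) hv')
  have h₂₃ : |⟪u₂, v⟫| ≤ ε₂₃ * ‖u₂‖ := by
    simpa [hnv] using abs_inner_le_friedrichsCos_mul_of_isClosed hV₂ hu₂ hv
      (orthogonal_le (inf_le_inf_right V₃ le_sup_right) hv')
  have h₁₂ : |⟪u₁, u₂⟫| ≤ ε * (‖u₁‖ * ‖u₂‖) :=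
    abs_inner_le_friedrichsCos_mul_of_isClosed hV₁ hu₁ hu₂ hu₂'
  have hellipse : ‖u₁‖ ^ 2 + ‖u₂‖ ^ 2 - 2 * ε * (‖u₁‖ * ‖u₂‖) ≤ 1 := by
    have := norm_add_sq_real u₁ u₂
    rw [hnu] at this
    linarith [neg_abs_le ⟪u₁, u₂⟫]
  have hlinear : |⟪u₁ + u₂, v⟫| ≤ ε₁₃ * ‖u₁‖ + ε₂₃ * ‖u₂‖ := by
    rw [inner_add_left]
    exact (abs_add_le _ _).trans (add_le_add h₁₃ h₂₃)
  have hden : 0 ≤ 1 - ε ^ 2 := by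
    nlinarith [friedrichsCos_nonneg V₁ V₂, friedrichsCos_le_one V₁ V₂]
  have hN : 0 ≤ ε₁₃ ^ 2 + ε₂₃ ^ 2 + 2 * ε * ε₂₃ * ε₁₃ := by
    have := friedrichsCos_nonneg V₁ V₂
    have := friedrichsCos_nonneg V₁ V₃
    have := friedrichsCos_nonneg V₂ V₃
    positivity
  calc |⟪u₁ + u₂, v⟫| ^ 2 * (1 - ε ^ 2) ≤ (ε₁₃ * ‖u₁‖ + ε₂₃ * ‖u₂‖) ^ 2 * (1 - ε ^ 2) := by
        gcongr
    _ ≤ (ε₁₃ ^ 2 + ε₂₃ ^ 2 + 2 * ε * ε₂₃ * ε₁₃) *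
          (‖u₁‖ ^ 2 + ‖u₂‖ ^ 2 - 2 * ε * (‖u₁‖ * ‖u₂‖)) :=
        add_mul_sq_mul_one_sub_sq_le _ _ _ _ _
    _ ≤ ε₁₃ ^ 2 + ε₂₃ ^ 2 + 2 * ε * ε₂₃ * ε₁₃ := mul_le_of_le_one_right hN hellipse

theorem cos_angle_sum_sq_bound_general
    {H : Type*} [NormedAddCommGroup H] [InnerProductSpace ℝ H] [CompleteSpace H]
    (V₁ V₂ V₃ : Submodule ℝ H)
    (hV₁ : IsClosed (V₁ : Set H)) (hV₂ : IsClosed (V₂ : Set H))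
    (hε : friedrichsCos V₁ V₂ < 1) :
    friedrichsCos (V₁ ⊔ V₂) V₃ ^ 2 ≤
      (friedrichsCos V₁ V₃ ^ 2 + friedrichsCos V₂ V₃ ^ 2 +
        2 * friedrichsCos V₁ V₂ * friedrichsCos V₂ V₃ * friedrichsCos V₁ V₃) /
        (1 - friedrichsCos V₁ V₂ ^ 2) := by
  have hden : 0 < 1 - friedrichsCos V₁ V₂ ^ 2 := by
    nlinarith [Submodule.friedrichsCos_nonneg V₁ V₂]
  have hnum : 0 ≤ friedrichsCos V₁ V₃ ^ 2 + friedrichsCos V₂ V₃ ^ 2 +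
      2 * friedrichsCos V₁ V₂ * friedrichsCos V₂ V₃ * friedrichsCos V₁ V₃ := by
    have := Submodule.friedrichsCos_nonneg V₁ V₂
    have := Submodule.friedrichsCos_nonneg V₁ V₃
    have := Submodule.friedrichsCos_nonneg V₂ V₃
    positivity
  exact Submodule.friedrichsCos_sq_le (div_nonneg hnum hden.le) fun u hu v hv hnu hnv _ hv' =>
    (le_div_iff₀ hden).2 (sq_abs_inner_mul_le_of_mem_sup hV₁ hV₂ hu hv hnu hnv hv')

theorem cos_angle_sum_sq_bound
    {H : Type*} [NormedAddCommGroup H] [InnerProductSpace ℝ H] [CompleteSpace H]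
    (V₁ V₂ V₃ : Submodule ℝ H)
    (hV₁ : IsClosed (V₁ : Set H)) (hV₂ : IsClosed (V₂ : Set H)) (hV₃ : IsClosed (V₃ : Set H))
    (hsum : IsClosed ((V₁ ⊔ V₂ : Submodule ℝ H) : Set H))
    (hε : friedrichsCos V₁ V₂ < 1) :
    friedrichsCos (V₁ ⊔ V₂) V₃ ^ 2 ≤
      (friedrichsCos V₁ V₃ ^ 2 + friedrichsCos V₂ V₃ ^ 2 +
        2 * friedrichsCos V₁ V₂ * friedrichsCos V₂ V₃ * friedrichsCos V₁ V₃) /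
        (1 - friedrichsCos V₁ V₂ ^ 2) :=
  cos_angle_sum_sq_bound_general V₁ V₂ V₃ hV₁ hV₂ hε
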